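/- Let G, K ∈ ℝ^{n×n} be invertible with I + GK invertible, S = (I + GK)⁻¹, Λ ∈ ℝ^{n×n}, and suppose condition (C) holds: xᵀ(I − Λ)(KS)⁻¹Gᵀx < xᵀGGᵀx for all nonzero x. Let w ∈ ℝⁿ, ε > 0, let φ : ℝⁿ → ℝ be differentiable, strictly convex and radially unbounded, and set Π = G and Π̂ = ΛΠ + (I − Λ)(−K⁻¹). Then the map u ↦ φ(Πu + w) has a unique minimizer u* with Πu* + w = argmin_y φ(y), and every continuously differentiable solution u : [0,∞) → ℝⁿ of u̇(t) = −ε Π̂ᵀ ∇φ(Πu(t) + w) converges to u* as t → ∞. -/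

import Mathlib

/-!
Since `(K S)⁻¹ = K⁻¹ + G`, one has `Π̂ Gᵀ = G Gᵀ - (I - Λ)(K S)⁻¹ Gᵀ`, so condition (C) says that
the quadratic form of `Π Π̂ᵀ` is positive definite, hence bounded below by `α ‖x‖²`. Along a
solution, `y = Π u + w` obeys `ẏ = -ε Π Π̂ᵀ ∇φ(y)`, so `φ ∘ y` decreases at rate at least
`ε α ‖∇φ(y)‖²` and `y` stays in the compact sublevel set of `φ (y 0)`. On that set convexity gives
`φ y - min φ ≤ ‖∇φ y‖ · r`, so `φ ∘ y` cannot stall above `min φ`; by compactness and uniqueness of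
the minimizer (strict convexity) `y` converges to it, and so does `u = Π⁻¹ (y - w)`.
-/

open Matrix Filter Set Topology RealInnerProductSpace

lemma Convex.sub_le_mul_sub_of_hasDerivAt_le {D : Set ℝ} (hD : Convex ℝ D) {f f' : ℝ → ℝ}
    {C : ℝ} (hf : ∀ t ∈ D, HasDerivAt f (f' t) t) (hle : ∀ t ∈ D, f' t ≤ C)
    {a b : ℝ} (ha : a ∈ D) (hb : b ∈ D) (hab : a ≤ b) : f b - f a ≤ C * (b - a) :=
  hD.image_sub_le_mul_sub_of_deriv_le
    (fun t ht => (hf t ht).continuousAt.continuousWithinAt)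
    (fun t ht => (hf t (interior_subset ht)).differentiableAt.differentiableWithinAt)
    (fun t ht => (hf t (interior_subset ht)).deriv ▸ hle t (interior_subset ht)) a ha b hb hab

lemma exists_lt_of_hasDerivAt_le_neg {f f' : ℝ → ℝ} {C : ℝ} (hC : 0 < C)
    (hf : ∀ t ∈ Ici (0 : ℝ), HasDerivAt f (f' t) t) (hle : ∀ t ∈ Ici (0 : ℝ), f' t ≤ -C)
    (m : ℝ) : ∃ t, 0 ≤ t ∧ f t < m := by
  set T := max 0 ((f 0 - m) / C + 1)
  have hT : 0 ≤ T := le_max_left _ _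
  have hdecay := (convex_Ici 0).sub_le_mul_sub_of_hasDerivAt_le hf hle (mem_Ici.2 le_rfl) hT hT
  have hCT : f 0 - m < C * T := calc
    f 0 - m < C * ((f 0 - m) / C + 1) := by rw [mul_add, mul_div_cancel₀ _ hC.ne']; linarith
    _ ≤ C * T := by gcongr; exact le_max_right _ _
  exact ⟨T, hT, by linarith⟩

lemma isCompact_sublevel_of_tendsto_cocompact {X : Type*} [TopologicalSpace X] {φ : X → ℝ}
    (hφ : Continuous φ) (hcoer : Tendsto φ (cocompact X) atTop) (c : ℝ) :
    IsCompact {z | φ z ≤ c} := by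
  obtain ⟨K, hK, hKc⟩ := mem_cocompact.mp (hcoer.eventually (eventually_gt_atTop c))
  exact hK.of_isClosed_subset (isClosed_le hφ continuous_const) fun z (hz : φ z ≤ c) =>
    by_contra fun hzK => (hKc hzK).not_ge hz

lemma tendsto_nhds_of_tendsto_comp_of_isCompact {X Y : Type*} [TopologicalSpace X]
    {K : Set X} (hK : IsCompact K) {φ : X → ℝ} (hφ : Continuous φ) {x₀ : X}
    (huniq : ∀ z ∈ K, φ z = φ x₀ → z = x₀) {l : Filter Y} {f : Y → X}
    (hmem : ∀ᶠ a in l, f a ∈ K) (hlim : Tendsto (φ ∘ f) l (𝓝 (φ x₀))) :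
    Tendsto f l (𝓝 x₀) := by
  refine hK.tendsto_nhds_of_unique_mapClusterPt hmem fun z hzK hz => huniq z hzK ?_
  have : ClusterPt (φ z) (𝓝 (φ x₀)) :=
    ClusterPt.mono (hz.continuousAt_comp hφ.continuousAt) hlim
  by_contra hne
  exact this.neBot.ne (disjoint_iff.mp (disjoint_nhds_nhds.mpr hne))

section InnerProductSpace

variable {E : Type*} [NormedAddCommGroup E] [InnerProductSpace ℝ E]

lemma ConvexOn.inner_gradient_le [CompleteSpace E] {φ : E → ℝ} (hconv : ConvexOn ℝ univ φ)
    (hdiff : Differentiable ℝ φ) (y z : E) : ⟪gradient φ y, z - y⟫ ≤ φ z - φ y := by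
  let ℓ : ℝ →ᵃ[ℝ] E := AffineMap.lineMap y z
  have hderiv : HasDerivAt (φ ∘ ℓ) ⟪gradient φ y, z - y⟫ 0 := by
    have hφ : HasFDerivAt φ (InnerProductSpace.toDual ℝ E (gradient φ y)) (ℓ 0) := by
      simpa [ℓ] using (hdiff y).hasGradientAt.hasFDerivAt
    simpa using hφ.comp_hasDerivAt (0:ℝ) AffineMap.hasDerivAt_lineMap
  simpa [slope, ℓ] using
    (hconv.comp_affineMap ℓ).le_slope_of_hasDerivAt (mem_univ 0) (mem_univ 1) one_pos hderiv

lemma ConvexOn.div_le_norm_gradient [CompleteSpace E] {φ : E → ℝ}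
    (hconv : ConvexOn ℝ univ φ) (hdiff : Differentiable ℝ φ) {y z : E} {r : ℝ} (hr : 0 < r)
    (hyz : ‖y - z‖ ≤ r) : (φ y - φ z) / r ≤ ‖gradient φ y‖ := by
  rw [div_le_iff₀ hr]
  calc φ y - φ z ≤ ⟪gradient φ y, y - z⟫ := by
        rw [← neg_sub z y, inner_neg_right]
        linarith [hconv.inner_gradient_le hdiff y z]
    _ ≤ ‖gradient φ y‖ * ‖y - z‖ := real_inner_le_norm _ _
    _ ≤ ‖gradient φ y‖ * r := by gcongr

lemma exists_pos_mul_sq_norm_le_inner_apply_self [FiniteDimensional ℝ E] (T : E →ₗ[ℝ] E)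
    (hT : ∀ x ≠ 0, 0 < ⟪x, T x⟫) : ∃ α, 0 < α ∧ ∀ x, α * ‖x‖ ^ 2 ≤ ⟪x, T x⟫ := by
  rcases subsingleton_or_nontrivial E with hE | hE
  · exact ⟨1, one_pos, fun x => by simp [Subsingleton.elim x 0]⟩
  have hq : Continuous fun x => ⟪x, T x⟫ := continuous_id.inner T.continuous_of_finiteDimensional
  obtain ⟨x₀, hx₀, hmin⟩ := (isCompact_sphere (0 : E) 1).exists_isMinOn
    (NormedSpace.sphere_nonempty.mpr zero_le_one) hq.continuousOn
  have hx₀ : x₀ ≠ 0 := ne_zero_of_mem_unit_sphere ⟨x₀, hx₀⟩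
  refine ⟨_, hT x₀ hx₀, fun x => ?_⟩
  rcases eq_or_ne x 0 with rfl | hx
  · simp
  have hnx : 0 < ‖x‖ := norm_pos_iff.mpr hx
  have hmem : ‖x‖⁻¹ • x ∈ Metric.sphere (0 : E) 1 := by
    simp [norm_smul, hnx.ne']
  have : ⟪x₀, T x₀⟫ ≤ ⟪‖x‖⁻¹ • x, T (‖x‖⁻¹ • x)⟫ := hmin hmem
  rw [map_smul, real_inner_smul_left, real_inner_smul_right] at this
  calc ⟪x₀, T x₀⟫ * ‖x‖ ^ 2 ≤ (‖x‖⁻¹ * (‖x‖⁻¹ * ⟪x, T x⟫)) * ‖x‖ ^ 2 := by gcongr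
    _ = ⟪x, T x⟫ := by field_simp

theorem StrictConvexOn.tendsto_of_hasDerivAt_eq_neg_gradient [FiniteDimensional ℝ E]
    {φ : E → ℝ} (hdiff : Differentiable ℝ φ) (hconv : StrictConvexOn ℝ univ φ)
    (hcoer : Tendsto φ (cocompact E) atTop) {x₀ : E} (hmin : ∀ z, φ x₀ ≤ φ z)
    {A : E → E} {α : ℝ} (hα : 0 < α) (hA : ∀ x, α * ‖x‖ ^ 2 ≤ ⟪x, A x⟫)
    {y : ℝ → E} (hy : ∀ t, 0 ≤ t → HasDerivAt y (-A (gradient φ (y t))) t) :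
    Tendsto y atTop (𝓝 x₀) := by
  set g := fun t => gradient φ (y t)
  have hV : ∀ t ∈ Ici (0 : ℝ), HasDerivAt (φ ∘ y) (-⟪g t, A (g t)⟫) t := fun t ht => by
    have := (hdiff (y t)).hasGradientAt.hasFDerivAt.comp_hasDerivAt t (hy t ht)
    rwa [InnerProductSpace.toDual_apply_apply, inner_neg_right] at this
  have hanti : ∀ s t, 0 ≤ s → s ≤ t → φ (y t) ≤ φ (y s) := fun s t hs hst => by
    have := (convex_Ici 0).sub_le_mul_sub_of_hasDerivAt_le hV
      (fun t _ => neg_nonpos.mpr ((by positivity : 0 ≤ α * ‖g t‖ ^ 2).trans (hA (g t))))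
      hs (hs.trans hst) hst
    simp only [Function.comp_apply, zero_mul] at this
    linarith
  set K := {z | φ z ≤ φ (y 0)}
  have hK : IsCompact K := isCompact_sublevel_of_tendsto_cocompact hdiff.continuous hcoer _
  have hyK : ∀ t, 0 ≤ t → y t ∈ K := fun t ht => hanti 0 t le_rfl ht
  have hinf : ∀ c, φ x₀ < c → ∃ t, 0 ≤ t ∧ φ (y t) < c := by
    intro c hc
    by_contra! hge
    obtain ⟨r, hr, hKr⟩ := hK.isBounded.subset_closedBall_lt 0 x₀
    have hρ : 0 < c - φ x₀ := sub_pos.2 hc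
    have hdecay : ∀ t ∈ Ici (0 : ℝ), -⟪g t, A (g t)⟫ ≤ -(α * ((c - φ x₀) / r) ^ 2) :=
      fun t ht => by
        have hgrad : (c - φ x₀) / r ≤ ‖g t‖ :=
          (div_le_div_of_nonneg_right (sub_le_sub_right (hge t ht) (φ x₀)) hr.le).trans
            (hconv.convexOn.div_le_norm_gradient hdiff hr
              (by simpa [dist_eq_norm] using hKr (hyK t ht)))
        have := mul_le_mul_of_nonneg_left (pow_le_pow_left₀ (by positivity) hgrad 2) hα.le
        linarith [hA (g t)]
    obtain ⟨T, -, hlt⟩ := exists_lt_of_hasDerivAt_le_neg (by positivity) hV hdecay (φ x₀)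
    exact hlt.not_ge (hmin _)
  have hlim : Tendsto (φ ∘ y) atTop (𝓝 (φ x₀)) := by
    refine tendsto_order.2 ⟨fun a ha => Eventually.of_forall fun t => ha.trans_le (hmin _),
      fun c hc => ?_⟩
    obtain ⟨t₁, ht₁, hlt⟩ := hinf c hc
    filter_upwards [eventually_ge_atTop t₁] with t ht
    exact (hanti t₁ t ht₁ ht).trans_lt hlt
  refine tendsto_nhds_of_tendsto_comp_of_isCompact hK hdiff.continuous ?_
    ((eventually_ge_atTop 0).mono hyK) hlim
  exact fun z _ hz => hconv.eq_of_isMinOn (fun w _ => hz ▸ hmin w) (fun w _ => hmin w)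
    (mem_univ z) (mem_univ x₀)

end InnerProductSpace

section Matrix

variable {ι R : Type*} [Fintype ι] [DecidableEq ι]

lemma Matrix.inv_mul_inv_one_add_mul [CommRing R] {G K : Matrix ι ι R} (hK : IsUnit K.det)
    (hGK : IsUnit (1 + G * K).det) : (K * (1 + G * K)⁻¹)⁻¹ = K⁻¹ + G := by
  rw [mul_inv_rev, nonsing_inv_nonsing_inv _ hGK, add_mul, one_mul, mul_assoc,
    mul_nonsing_inv K hK, mul_one]

lemma Matrix.dotProduct_mulVec_mul_transpose_pos [CommRing R] [PartialOrder R] [IsOrderedRing R]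
    {G K Λ : Matrix ι ι R} (hK : IsUnit K.det) (hGK : IsUnit (1 + G * K).det)
    (hC : ∀ x : ι → R, x ≠ 0 →
      x ⬝ᵥ ((1 - Λ) * (K * (1 + G * K)⁻¹)⁻¹ * Gᵀ) *ᵥ x < x ⬝ᵥ (G * Gᵀ) *ᵥ x)
    (x : ι → R) (hx : x ≠ 0) : 0 < x ⬝ᵥ (G * (Λ * G + (1 - Λ) * (-K⁻¹))ᵀ) *ᵥ x := by
  have hmodel : (Λ * G + (1 - Λ) * (-K⁻¹)) * Gᵀ
      = G * Gᵀ - (1 - Λ) * (K * (1 + G * K)⁻¹)⁻¹ * Gᵀ := by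
    rw [inv_mul_inv_one_add_mul hK hGK]
    noncomm_ring
  rw [← transpose_transpose (G * _), transpose_mul, transpose_transpose,
    dotProduct_transpose_mulVec, hmodel, sub_mulVec, dotProduct_sub, sub_pos]
  exact hC x hx

lemma Matrix.hasDerivAt_toEuclideanLin_add_const (G : Matrix ι ι ℝ)
    (w : EuclideanSpace ℝ ι) {u : ℝ → EuclideanSpace ℝ ι} {u' : EuclideanSpace ℝ ι} {t : ℝ}
    (hu : HasDerivAt u u' t) :
    HasDerivAt (fun t => toEuclideanLin G (u t) + w) (toEuclideanLin G u') t :=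
  ((toEuclideanLin G).toContinuousLinearMap.hasFDerivAt.comp_hasDerivAt t hu).add_const w

lemma Matrix.toEuclideanLin_apply_eq_iff [RCLike R] {G : Matrix ι ι R} (hG : IsUnit G.det)
    {u v : EuclideanSpace R ι} : toEuclideanLin G u = v ↔ u = toEuclideanLin G⁻¹ v := by
  constructor <;> rintro rfl <;>
    simp only [← LinearMap.comp_apply, ← toLpLin_mul_same, nonsing_inv_mul _ hG,
      mul_nonsing_inv _ hG, toLpLin_one, LinearMap.id_apply]

end Matrix

/-- **OAG convergence.** Under condition (C), with `Π = G` and biased model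
`Π̂ = ΛΠ + (I − Λ)(−K⁻¹)`, the map `u ↦ φ(Πu + w)` has a unique minimizer `u*` with
`Πu* + w = argmin_y φ(y)`, and every continuously differentiable solution of the OAG
dynamics `u̇ = −ε Π̂ᵀ ∇φ(Πu + w)` on `[0, ∞)` converges to `u*`. -/
theorem stmt14 {n : ℕ} (G K : Matrix (Fin n) (Fin n) ℝ)
    (hG : IsUnit G.det) (hK : IsUnit K.det) (hGK : IsUnit (1 + G * K).det)
    (S : Matrix (Fin n) (Fin n) ℝ) (hS : S = (1 + G * K)⁻¹)
    (Λ : Matrix (Fin n) (Fin n) ℝ)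
    (hC : ∀ x : Fin n → ℝ, x ≠ 0 →
      x ⬝ᵥ ((1 - Λ) * (K * S)⁻¹ * G.transpose).mulVec x
        < x ⬝ᵥ (G * G.transpose).mulVec x)
    (w : EuclideanSpace ℝ (Fin n)) (ε : ℝ) (hε : 0 < ε)
    (φ : EuclideanSpace ℝ (Fin n) → ℝ)
    (hdiff : Differentiable ℝ φ)
    (hconv : StrictConvexOn ℝ Set.univ φ)
    (hrad : Tendsto φ (comap norm atTop) atTop)
    (P Phat : Matrix (Fin n) (Fin n) ℝ)
    (hP : P = G) (hPhat : Phat = Λ * P + (1 - Λ) * (-K⁻¹)) :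
    ∃ ustar : EuclideanSpace ℝ (Fin n),
      (∀ u, φ (Matrix.toEuclideanLin P ustar + w) ≤ φ (Matrix.toEuclideanLin P u + w)) ∧
      (∀ u', (∀ u, φ (Matrix.toEuclideanLin P u' + w) ≤ φ (Matrix.toEuclideanLin P u + w)) →
        u' = ustar) ∧
      (∀ y, φ (Matrix.toEuclideanLin P ustar + w) ≤ φ y) ∧
      (∀ u : ℝ → EuclideanSpace ℝ (Fin n),
        ContDiffOn ℝ 1 u (Set.Ici 0) →
        (∀ t : ℝ, 0 ≤ t → HasDerivAt u
          (-(ε • Matrix.toEuclideanLin Phat.transpose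
              (gradient φ (Matrix.toEuclideanLin P (u t) + w)))) t) →
        Tendsto u atTop (nhds ustar)) := by
  subst S P
  rw [comap_norm_atTop, Metric.cobounded_eq_cocompact] at hrad
  obtain ⟨ystar, hmin⟩ := hdiff.continuous.exists_forall_le hrad
  have hsolve : ∀ u y, toEuclideanLin G u + w = y ↔ u = toEuclideanLin G⁻¹ (y - w) := fun u y =>
    eq_sub_iff_add_eq.symm.trans (toEuclideanLin_apply_eq_iff hG)
  have hbest : ∀ z, φ (toEuclideanLin G (toEuclideanLin G⁻¹ (ystar - w)) + w) ≤ φ z := by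
    rw [(hsolve _ ystar).2 rfl]
    exact hmin
  refine ⟨_, fun u => hbest _, fun u' hu' => (hsolve _ _).1 ?_, hbest, fun u _ hu => ?_⟩
  · have hglobal : ∀ z, φ (toEuclideanLin G u' + w) ≤ φ z := fun z => by
      simpa only [(hsolve _ z).2 rfl] using hu' (toEuclideanLin G⁻¹ (z - w))
    exact hconv.eq_of_isMinOn (fun z _ => hglobal z) (fun z _ => hmin z) trivial trivial
  obtain ⟨α, hα, hcoercive⟩ := exists_pos_mul_sq_norm_le_inner_apply_self
    (toEuclideanLin (G * Phatᵀ)) fun x hx => (inner_toEuclideanCLM _ x x).symm ▸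
      hPhat ▸ dotProduct_mulVec_mul_transpose_pos hK hGK hC _ (by simpa using hx)
  have hy := hconv.tendsto_of_hasDerivAt_eq_neg_gradient hdiff hrad hmin (mul_pos hε hα)
    (A := fun x => ε • toEuclideanLin (G * Phatᵀ) x)
    (fun x => by
      rw [real_inner_smul_right, mul_assoc]
      exact mul_le_mul_of_nonneg_left (hcoercive x) hε.le)
    fun t ht => (hasDerivAt_toEuclideanLin_add_const G w (hu t ht)).congr_deriv <| by
      rw [map_neg, map_smul, toLpLin_mul_same, LinearMap.comp_apply]
  have hu_eq : u = fun t => toEuclideanLin G⁻¹ (toEuclideanLin G (u t) + w - w) :=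
    funext fun t => (hsolve _ _).1 rfl
  rw [hu_eq]
  exact ((toEuclideanCLM (𝕜 := ℝ) G⁻¹).continuous.tendsto _).comp (hy.sub_const w)
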